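/- Let M = max{|a_k| : 1 ≤ k ≤ n−1}. Suppose n ≥ 3, 1 < |a_0|, |a_{n−1}| < M, and β ∈ {1, …, n−2} is such that ‖X_β‖_1 ≤ ‖X_b‖_1 for all b ∈ {1, …, n−2}. If ‖X_β‖_1 belongs to the set {|a_0|, 1 + |a_{n−1}|} ∪ {1 + |a_k|/|a_0| : 1 ≤ k ≤ β−1}, then for every c with 1 ≤ c ≤ n−2 and every matrix A of type E_c(p♯)^{−1}, ‖X_β‖_1 ≤ ‖A‖_1. -/

import Mathlib

noncomputable section

/-- Maximum absolute row sum (the `∞`-norm). -/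
def infNorm {n : ℕ} (A : Matrix (Fin n) (Fin n) ℂ) : ℝ :=
  ⨆ i, ∑ j, ‖A i j‖

/-- Maximum absolute column sum (the `1`-norm). -/
def oneNorm {n : ℕ} (A : Matrix (Fin n) (Fin n) ℂ) : ℝ :=
  ⨆ j, ∑ i, ‖A i j‖

/-- `N(A) = min {‖A‖_∞, ‖A‖_1}`. -/
def NN {n : ℕ} (A : Matrix (Fin n) (Fin n) ℂ) : ℝ :=
  min (infNorm A) (oneNorm A)

/-- The monic polynomial `p(x) = x^n + a_{n-1}x^{n-1} + ⋯ + a_1 x + a_0`. -/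
def pPoly (n : ℕ) (a : ℕ → ℂ) : Polynomial ℂ :=
  Polynomial.X ^ n + ∑ k ∈ Finset.range n, Polynomial.C (a k) * Polynomial.X ^ k

/-- Coefficients of the monic reversal polynomial `p♯`:
`asharp n a k` is the coefficient of `x^k` in `p♯`, namely `1/a_0` for `k = 0`
and `a_{n-k}/a_0` for `1 ≤ k ≤ n-1`. -/
def asharp (n : ℕ) (a : ℕ → ℂ) : ℕ → ℂ :=
  fun k => if k = 0 then 1 / a 0 else a (n - k) / a 0

/-- A unit sparse companion matrix of `p` in Hessenberg form, with explicit data: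
`m` (0-based; `m + 1 ≤ n`), and 0-based positions `(r k, c k)` (for `k = 0, …, n-1`)
satisfying `r k - c k = k`, `m ≤ r k ≤ n-1`, `0 ≤ c k ≤ m`; the superdiagonal
entries are `1`, the entry at `(r k, c k)` is `-a_{n-1-k}`, and all other entries
are `0`.  (This is the 0-based translation of the 1-based description.) -/
def IsUnitSparseData (n m : ℕ) (a : ℕ → ℂ) (C : Matrix (Fin n) (Fin n) ℂ)
    (r c : Fin n → Fin n) : Prop :=
  m + 1 ≤ n ∧
  (∀ k : Fin n, (r k : ℕ) = (c k : ℕ) + (k : ℕ)) ∧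
  (∀ k : Fin n, m ≤ (r k : ℕ)) ∧
  (∀ k : Fin n, (c k : ℕ) ≤ m) ∧
  (∀ k : Fin n, C (r k) (c k) = -a (n - 1 - (k : ℕ))) ∧
  (∀ i j : Fin n, (j : ℕ) = (i : ℕ) + 1 → C i j = 1) ∧
  (∀ i j : Fin n, (j : ℕ) ≠ (i : ℕ) + 1 →
    (∀ k : Fin n, ¬(r k = i ∧ c k = j)) → C i j = 0)

/-- A unit sparse companion matrix of `p` in Hessenberg form. -/
def IsUnitSparse (n : ℕ) (a : ℕ → ℂ) (C : Matrix (Fin n) (Fin n) ℂ) : Prop :=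
  ∃ (m : ℕ) (r c : Fin n → Fin n), IsUnitSparseData n m a C r c

/-- A Fiedler companion matrix of `p` in Hessenberg form (with explicit position
data): a unit sparse companion matrix such that for `1 ≤ k ≤ n-1`, if `-a_{k-1}`
occupies position `(i,j)` then `-a_k` occupies position `(i-1,j)` or `(i,j+1)`.
Here the coefficient `-a_{n-1-k}` sits at position index `k`, so the coefficient
`-a_{k-1}` has index `k' = n-k` and `-a_k` has index `n-1-k = k' - 1`. -/
def IsFiedlerData (n m : ℕ) (a : ℕ → ℂ) (C : Matrix (Fin n) (Fin n) ℂ)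
    (r c : Fin n → Fin n) : Prop :=
  IsUnitSparseData n m a C r c ∧
  ∀ k k' : Fin n, (k' : ℕ) = (k : ℕ) + 1 →
    ((r k : ℕ) + 1 = (r k' : ℕ) ∧ c k = c k') ∨
    (r k = r k' ∧ (c k : ℕ) = (c k' : ℕ) + 1)

/-- The Frobenius companion matrix of the monic polynomial with coefficients `a`
(0-based: superdiagonal `1`'s and last row `-a_0, -a_1, …, -a_{n-1}`). -/
def Frob (n : ℕ) (a : ℕ → ℂ) : Matrix (Fin n) (Fin n) ℂ :=
  Matrix.of fun i j =>
    if (j : ℕ) = (i : ℕ) + 1 then 1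
    else if (i : ℕ) = n - 1 then -a (j : ℕ)
    else 0

/-- The Fiedler companion matrix `L_b` (0-based translation): superdiagonal `1`'s,
`(L_b)_{i,b} = -a_{n+b-1-i}` for `b ≤ i ≤ n-2`, and `(L_b)_{n-1,j} = -a_j` for
`0 ≤ j ≤ b`; all other entries `0`. -/
def Lmat (n b : ℕ) (a : ℕ → ℂ) : Matrix (Fin n) (Fin n) ℂ :=
  Matrix.of fun i j =>
    if (j : ℕ) = (i : ℕ) + 1 then 1
    else if (i : ℕ) = n - 1 ∧ (j : ℕ) ≤ b then -a (j : ℕ)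
    else if (j : ℕ) = b ∧ b ≤ (i : ℕ) ∧ (i : ℕ) + 2 ≤ n then -a (n + b - 1 - (i : ℕ))
    else 0

/-- The matrix `W` (0-based translation): `W_{0,0} = -a_{n-1}`, `W_{0,n-1} = -a_0`,
`W_{i,i-1} = 1` for `1 ≤ i ≤ n-1`, `W_{i,0} = a_{i-1}/a_0` for `2 ≤ i ≤ n-1`;
all other entries `0`. -/
def Wmat (n : ℕ) (a : ℕ → ℂ) : Matrix (Fin n) (Fin n) ℂ :=
  Matrix.of fun i j =>
    if (i : ℕ) = 0 ∧ (j : ℕ) = 0 then -a (n - 1)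
    else if (i : ℕ) = 0 ∧ (j : ℕ) = n - 1 then -a 0
    else if (i : ℕ) = (j : ℕ) + 1 then 1
    else if 2 ≤ (i : ℕ) ∧ (j : ℕ) = 0 then a ((i : ℕ) - 1) / a 0
    else 0

/-- The matrix `X_b` (0-based translation): `(X_b)_{0,j} = -a_{n-1-j}` for
`0 ≤ j ≤ n-2-b`, `(X_b)_{0,n-1} = -a_0`, `(X_b)_{i,i-1} = 1` for `1 ≤ i ≤ n-2`,
`(X_b)_{n-1,n-2} = 1`, `(X_b)_{n-1,j} = a_{n-2-j}/a_0` for `n-2-b ≤ j ≤ n-3`;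
all other entries `0`. -/
def Xmat (n b : ℕ) (a : ℕ → ℂ) : Matrix (Fin n) (Fin n) ℂ :=
  Matrix.of fun i j =>
    if (i : ℕ) = 0 ∧ (j : ℕ) + b ≤ n - 2 then -a (n - 1 - (j : ℕ))
    else if (i : ℕ) = 0 ∧ (j : ℕ) = n - 1 then -a 0
    else if (i : ℕ) = (j : ℕ) + 1 ∧ (i : ℕ) + 2 ≤ n then 1
    else if (i : ℕ) = n - 1 ∧ (j : ℕ) = n - 2 then 1
    else if (i : ℕ) = n - 1 ∧ n - 2 ≤ (j : ℕ) + b ∧ (j : ℕ) + 3 ≤ n then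
      a (n - 2 - (j : ℕ)) / a 0
    else 0

/-- A matrix `E` of type `E_c(q)` for the monic polynomial with coefficients `b`
(0-based translation of the 1-based description): superdiagonal `1`'s,
`E_{n-1,0} = -b_0`, and positions `(r k, col k)` for `k = 0, …, n-2` with
`r k = col k + k`, `c ≤ r k`, `1 ≤ col k ≤ c`, holding `-b_{n-1-k}`; all other
entries `0`. -/
def IsTypeE (n c : ℕ) (b : ℕ → ℂ) (E : Matrix (Fin n) (Fin n) ℂ) : Prop :=
  ∃ r col : ℕ → Fin n,
    (∀ k : ℕ, k ≤ n - 2 → (r k : ℕ) = (col k : ℕ) + k) ∧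
    (∀ k : ℕ, k ≤ n - 2 → c ≤ (r k : ℕ)) ∧
    (∀ k : ℕ, k ≤ n - 2 → 1 ≤ (col k : ℕ) ∧ (col k : ℕ) ≤ c) ∧
    (∀ k : ℕ, k ≤ n - 2 → E (r k) (col k) = -b (n - 1 - k)) ∧
    (∀ i j : Fin n, (j : ℕ) = (i : ℕ) + 1 → E i j = 1) ∧
    (∀ i j : Fin n, (i : ℕ) = n - 1 → (j : ℕ) = 0 → E i j = -b 0) ∧
    (∀ i j : Fin n, (j : ℕ) ≠ (i : ℕ) + 1 → ¬((i : ℕ) = n - 1 ∧ (j : ℕ) = 0) →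
      (∀ k : ℕ, k ≤ n - 2 → ¬(r k = i ∧ col k = j)) → E i j = 0)

/-- `A` is of type `E_c(p♯)⁻¹`: `A = E⁻¹` for some `E` of type `E_c(p♯)`. -/
def IsTypeEInv (n c : ℕ) (a : ℕ → ℂ) (A : Matrix (Fin n) (Fin n) ℂ) : Prop :=
  ∃ E : Matrix (Fin n) (Fin n) ℂ, IsTypeE n c (asharp n a) E ∧ A = E⁻¹


/-!
Indices are `0`-based, as in the definitions above. Let `Q` be the cyclic shift with ones on
the superdiagonal and corner entry `Q (n-1) 0 = -1/a₀`, and `P` the transposed shift with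
corner entry `P 0 (n-1) = -a₀`, so that `Q P = 1`. A matrix `E` of type `E_c(p♯)` is `Q - F`
where `F` is supported in rows `≥ c` and columns `1, …, c`. Right multiplication by `P`
moves column `j + 1` to column `j`, so `F P` is supported in columns `< c`, whence
`F P F = 0` and `E⁻¹ = P + P F P`.

Reading off entries of `E⁻¹`: column `n-1` contains `-a₀`, and if the coefficient
`a_{k+1}/a₀` of `F` sits at `(r, j)`, column `j-1` contains a `1` in row `j` together with
`a_{k+1}/a₀` in row `r+1` (if `r < n-1`) or `-a_{k+1}` in row `0` (if `r = n-1`, which is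
forced for `k = n-2`). Each of the three admissible values of `‖X_β‖₁` is thereby bounded
by a column sum of `E⁻¹`.
-/

open Matrix

def cyclicShift {R : Type*} [Zero R] [One R] (n : ℕ) (t : R) : Matrix (Fin n) (Fin n) R :=
  Matrix.of fun i j =>
    if (j : ℕ) = (i : ℕ) + 1 then 1 else if (i : ℕ) = n - 1 ∧ (j : ℕ) = 0 then t else 0

section CyclicShift

variable {R : Type*} [Semiring R] {n : ℕ} (M : Matrix (Fin n) (Fin n) R) (s : R)

theorem mul_transpose_cyclicShift_apply_of_val_eq_succ {i j j' : Fin n}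
    (h : (j' : ℕ) = j + 1) : (M * (cyclicShift n s)ᵀ) i j = M i j' := by
  rw [mul_apply, Finset.sum_eq_single j']
  · simp [cyclicShift, h]
  · intro l _ hl
    have hl₁ : (l : ℕ) ≠ j + 1 := fun h' => hl (Fin.ext (by omega))
    have hl₂ : ¬((j : ℕ) = n - 1 ∧ (l : ℕ) = 0) := by omega
    simp [cyclicShift, hl₁, hl₂]
  · simp

theorem mul_transpose_cyclicShift_apply_of_val_eq_last {i j j₀ : Fin n}
    (hj : (j : ℕ) = n - 1) (h₀ : (j₀ : ℕ) = 0) :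
    (M * (cyclicShift n s)ᵀ) i j = M i j₀ * s := by
  rw [mul_apply, Finset.sum_eq_single j₀]
  · simp [cyclicShift, hj, h₀]
  · intro l _ hl
    have hl₀ : (l : ℕ) ≠ 0 := fun h' => hl (Fin.ext (by omega))
    have hln : (l : ℕ) ≠ n - 1 + 1 := by omega
    simp [cyclicShift, hj, hl₀, hln]
  · simp

theorem transpose_cyclicShift_mul_apply_of_val_eq_succ {i i' j : Fin n}
    (h : (i' : ℕ) = i + 1) : ((cyclicShift n s)ᵀ * M) i' j = M i j := by
  rw [mul_apply, Finset.sum_eq_single i]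
  · simp [cyclicShift, h]
  · intro l _ hl
    have hil : (i : ℕ) ≠ l := fun h' => hl (Fin.ext h'.symm)
    simp [cyclicShift, hil, h]
  · simp

theorem transpose_cyclicShift_mul_apply_of_val_eq_zero {i l j : Fin n} (hi : (i : ℕ) = 0)
    (hl : (l : ℕ) = n - 1) : ((cyclicShift n s)ᵀ * M) i j = s * M l j := by
  rw [mul_apply, Finset.sum_eq_single l]
  · simp [cyclicShift, hi, hl]
  · intro l' _ hl'
    have hl'n : (l' : ℕ) ≠ n - 1 := fun h' => hl' (Fin.ext (by omega))
    simp [cyclicShift, hi, hl'n]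
  · simp

theorem cyclicShift_mul_transpose_cyclicShift {t : R} (h : t * s = 1) :
    cyclicShift n t * (cyclicShift n s)ᵀ = 1 := by
  ext i j
  by_cases hj : (j : ℕ) = n - 1
  · rw [mul_transpose_cyclicShift_apply_of_val_eq_last _ s (j₀ := ⟨0, by omega⟩) hj rfl]
    simp [cyclicShift, one_apply, Fin.ext_iff, hj, h]
  · rw [mul_transpose_cyclicShift_apply_of_val_eq_succ _ s (j' := ⟨j + 1, by omega⟩) rfl]
    simp [cyclicShift, one_apply, Fin.ext_iff, eq_comm]

end CyclicShift

theorem sub_mul_add_mul_mul_eq_one {α : Type*} [Ring α] {q p f : α} (hqp : q * p = 1)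
    (hfpf : f * p * f = 0) : (q - f) * (p + p * f * p) = 1 := by
  calc (q - f) * (p + p * f * p) = q * p + q * p * f * p - f * p - f * p * f * p := by
        noncomm_ring
    _ = 1 := by rw [hqp, hfpf]; noncomm_ring

def IsSupportedInBlock {R : Type*} [Zero R] {n : ℕ} (c : ℕ) (F : Matrix (Fin n) (Fin n) R) :
    Prop :=
  ∀ i j, F i j ≠ 0 → c ≤ (i : ℕ) ∧ 1 ≤ (j : ℕ) ∧ (j : ℕ) ≤ c

def invOfShiftSub {R : Type*} [Semiring R] {n : ℕ} (s : R) (F : Matrix (Fin n) (Fin n) R) :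
    Matrix (Fin n) (Fin n) R :=
  (cyclicShift n s)ᵀ + (cyclicShift n s)ᵀ * F * (cyclicShift n s)ᵀ

section BlockPerturbation

variable {R : Type*} {n c : ℕ}

theorem mul_transpose_cyclicShift_apply_eq_zero [Semiring R] {F : Matrix (Fin n) (Fin n) R}
    (s : R) (hF : IsSupportedInBlock c F) (i : Fin n) {l : Fin n} (hl : c ≤ (l : ℕ)) :
    (F * (cyclicShift n s)ᵀ) i l = 0 := by
  by_cases hlast : (l : ℕ) = n - 1
  · rw [mul_transpose_cyclicShift_apply_of_val_eq_last _ s (j₀ := ⟨0, by omega⟩) hlast rfl]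
    by_contra h
    have := (hF _ _ (left_ne_zero_of_mul h)).2.1
    dsimp only at this
    omega
  · rw [mul_transpose_cyclicShift_apply_of_val_eq_succ _ s (j' := ⟨l + 1, by omega⟩) rfl]
    by_contra h
    have := (hF _ _ h).2.2
    dsimp only at this
    omega

theorem mul_transpose_cyclicShift_mul_eq_zero [Semiring R] {F : Matrix (Fin n) (Fin n) R}
    (s : R) (hF : IsSupportedInBlock c F) : F * (cyclicShift n s)ᵀ * F = 0 := by
  ext i j
  rw [mul_apply, Matrix.zero_apply]
  refine Finset.sum_eq_zero fun l _ => ?_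
  by_cases h : F l j = 0
  · rw [h, mul_zero]
  · rw [mul_transpose_cyclicShift_apply_eq_zero s hF i (hF l j h).1, zero_mul]

theorem cyclicShift_sub_mul_invOfShiftSub [Ring R] {F : Matrix (Fin n) (Fin n) R} {t s : R}
    (h : t * s = 1) (hF : IsSupportedInBlock c F) :
    (cyclicShift n t - F) * invOfShiftSub s F = 1 :=
  sub_mul_add_mul_mul_eq_one (cyclicShift_mul_transpose_cyclicShift s h)
    (mul_transpose_cyclicShift_mul_eq_zero s hF)

variable [Semiring R] {F : Matrix (Fin n) (Fin n) R} (s : R)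

theorem invOfShiftSub_apply_of_val_eq_succ (hF : IsSupportedInBlock c F) {j m : Fin n}
    (hjc : (j : ℕ) ≤ c) (hm : (j : ℕ) = m + 1) : invOfShiftSub s F j m = 1 := by
  rw [invOfShiftSub, Matrix.add_apply, mul_transpose_cyclicShift_apply_of_val_eq_succ _ s hm,
    transpose_cyclicShift_mul_apply_of_val_eq_succ _ s hm]
  have hF₀ : F m j = 0 := by
    by_contra h
    have := (hF _ _ h).1
    omega
  simp [cyclicShift, hm, hF₀]

theorem invOfShiftSub_apply_of_lt {r r' j m : Fin n} (hr : c ≤ (r : ℕ))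
    (hr' : (r' : ℕ) = r + 1) (hjc : (j : ℕ) ≤ c) (hm : (j : ℕ) = m + 1) :
    invOfShiftSub s F r' m = F r j := by
  rw [invOfShiftSub, Matrix.add_apply, mul_transpose_cyclicShift_apply_of_val_eq_succ _ s hm,
    transpose_cyclicShift_mul_apply_of_val_eq_succ _ s hr']
  have h₁ : (r' : ℕ) ≠ m + 1 := by omega
  have h₂ : (m : ℕ) ≠ n - 1 := by omega
  simp [cyclicShift, h₁, h₂]

theorem invOfShiftSub_apply_of_last {r i₀ j m : Fin n} (hr : (r : ℕ) = n - 1)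
    (hi₀ : (i₀ : ℕ) = 0) (hm : (j : ℕ) = m + 1) : invOfShiftSub s F i₀ m = s * F r j := by
  rw [invOfShiftSub, Matrix.add_apply, mul_transpose_cyclicShift_apply_of_val_eq_succ _ s hm,
    transpose_cyclicShift_mul_apply_of_val_eq_zero _ s hi₀ hr]
  have hm' : (m : ℕ) ≠ n - 1 := by omega
  simp [cyclicShift, hi₀, hm']

theorem invOfShiftSub_apply_zero_last (hF : IsSupportedInBlock c F) {i₀ l : Fin n}
    (hi₀ : (i₀ : ℕ) = 0) (hl : (l : ℕ) = n - 1) : invOfShiftSub s F i₀ l = s := by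
  rw [invOfShiftSub, Matrix.add_apply, mul_transpose_cyclicShift_apply_of_val_eq_last _ s hl hi₀,
    transpose_cyclicShift_mul_apply_of_val_eq_zero _ s hi₀ hl]
  have hF₀ : F l i₀ = 0 := by
    by_contra h
    have := (hF _ _ h).2.1
    omega
  simp [cyclicShift, hi₀, hl, hF₀]

end BlockPerturbation

section OneNorm

variable {n : ℕ} (A : Matrix (Fin n) (Fin n) ℂ)

theorem sum_norm_le_oneNorm (j : Fin n) : ∑ i, ‖A i j‖ ≤ oneNorm A :=
  le_ciSup (f := fun j => ∑ i, ‖A i j‖) (Set.finite_range _).bddAbove j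

theorem norm_le_oneNorm (i j : Fin n) : ‖A i j‖ ≤ oneNorm A :=
  (Finset.single_le_sum (fun i _ => norm_nonneg (A i j)) (Finset.mem_univ i)).trans
    (sum_norm_le_oneNorm A j)

theorem norm_add_norm_le_oneNorm {i i' : Fin n} (h : i ≠ i') (j : Fin n) :
    ‖A i j‖ + ‖A i' j‖ ≤ oneNorm A := by
  rw [← Finset.sum_pair h (f := fun i => ‖A i j‖)]
  exact (Finset.sum_le_sum_of_subset_of_nonneg (Finset.subset_univ _)
    fun _ _ _ => norm_nonneg _).trans (sum_norm_le_oneNorm A j)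

variable {c : ℕ} {F : Matrix (Fin n) (Fin n) ℂ} (s : ℂ)

theorem norm_le_oneNorm_invOfShiftSub (hF : IsSupportedInBlock c F) (hn : 0 < n) :
    ‖s‖ ≤ oneNorm (invOfShiftSub s F) := by
  have := norm_le_oneNorm (invOfShiftSub s F) ⟨0, hn⟩ ⟨n - 1, by omega⟩
  rwa [invOfShiftSub_apply_zero_last s hF rfl rfl] at this

theorem one_add_norm_le_oneNorm_invOfShiftSub (hF : IsSupportedInBlock c F) {r j : Fin n}
    (hr : c ≤ (r : ℕ)) (hrn : (r : ℕ) + 1 < n) (hj : 1 ≤ (j : ℕ) ∧ (j : ℕ) ≤ c) :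
    1 + ‖F r j‖ ≤ oneNorm (invOfShiftSub s F) := by
  have hne : j ≠ ⟨r + 1, hrn⟩ := Fin.ne_of_val_ne (by dsimp only; omega)
  have := norm_add_norm_le_oneNorm (invOfShiftSub s F) hne ⟨j - 1, by omega⟩
  rwa [invOfShiftSub_apply_of_val_eq_succ s hF hj.2 (by dsimp only; omega),
    invOfShiftSub_apply_of_lt s hr rfl hj.2 (by dsimp only; omega), norm_one] at this

theorem one_add_norm_mul_le_oneNorm_invOfShiftSub (hF : IsSupportedInBlock c F) {r j : Fin n}
    (hr : (r : ℕ) = n - 1) (hj : 1 ≤ (j : ℕ) ∧ (j : ℕ) ≤ c) :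
    1 + ‖s * F r j‖ ≤ oneNorm (invOfShiftSub s F) := by
  have hne : j ≠ ⟨0, by omega⟩ := Fin.ne_of_val_ne (by dsimp only; omega)
  have := norm_add_norm_le_oneNorm (invOfShiftSub s F) hne ⟨j - 1, by omega⟩
  rwa [invOfShiftSub_apply_of_val_eq_succ s hF hj.2 (by dsimp only; omega),
    invOfShiftSub_apply_of_last s (j := j) hr rfl (by dsimp only; omega), norm_one] at this

end OneNorm

theorem asharp_sub_one_sub {n k : ℕ} (a : ℕ → ℂ) (hk : k + 2 ≤ n) :
    asharp n a (n - 1 - k) = a (k + 1) / a 0 := by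
  rw [asharp, if_neg (by omega), show n - (n - 1 - k) = k + 1 by omega]

namespace IsTypeE

variable {n c : ℕ} {E : Matrix (Fin n) (Fin n) ℂ}

theorem isSupportedInBlock_sub {b : ℕ → ℂ} (hE : IsTypeE n c b E) :
    IsSupportedInBlock c (cyclicShift n (-b 0) - E) := by
  obtain ⟨r, col, -, hcr, hcol, -, hsup, hcorner, hzero⟩ := hE
  intro i j h
  rw [Matrix.sub_apply] at h
  by_cases hs : (j : ℕ) = i + 1
  · simp [cyclicShift, hs, hsup i j hs] at h
  by_cases hc : (i : ℕ) = n - 1 ∧ (j : ℕ) = 0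
  · simp [cyclicShift, hc, hcorner i j hc.1 hc.2] at h
  obtain ⟨k, hk, rfl, rfl⟩ : ∃ k ≤ n - 2, r k = i ∧ col k = j := by
    by_contra! hk
    simp [cyclicShift, hs, hc, hzero i j hs hc fun k hk' h' => hk k hk' h'.1 h'.2] at h
  exact ⟨hcr k hk, hcol k hk⟩

theorem exists_sub_apply {b : ℕ → ℂ} (hE : IsTypeE n c b E) {k : ℕ} (hk : k ≤ n - 2) :
    ∃ i j : Fin n,
      (i : ℕ) = j + k ∧ c ≤ (i : ℕ) ∧ (1 ≤ (j : ℕ) ∧ (j : ℕ) ≤ c) ∧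
      (cyclicShift n (-b 0) - E) i j = b (n - 1 - k) := by
  obtain ⟨r, col, hrc, hcr, hcol, hval, -⟩ := hE
  refine ⟨r k, col k, hrc k hk, hcr k hk, hcol k hk, ?_⟩
  have h₁ : (col k : ℕ) ≠ r k + 1 := by have := hrc k hk; omega
  have h₂ : (col k : ℕ) ≠ 0 := by have := (hcol k hk).1; omega
  simp [cyclicShift, h₁, h₂, hval k hk]

variable {a : ℕ → ℂ}

theorem inv_eq_invOfShiftSub (hE : IsTypeE n c (asharp n a) E) (ha : a 0 ≠ 0) :
    E⁻¹ = invOfShiftSub (-a 0) (cyclicShift n (-asharp n a 0) - E) := by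
  refine inv_eq_right_inv ?_
  have hts : -asharp n a 0 * -a 0 = 1 := by simp [asharp, ha]
  simpa only [sub_sub_cancel] using
    cyclicShift_sub_mul_invOfShiftSub hts hE.isSupportedInBlock_sub

theorem norm_le_oneNorm_inv (hE : IsTypeE n c (asharp n a) E) (ha : a 0 ≠ 0) (hn : 0 < n) :
    ‖a 0‖ ≤ oneNorm E⁻¹ := by
  rw [hE.inv_eq_invOfShiftSub ha, ← norm_neg (a 0)]
  exact norm_le_oneNorm_invOfShiftSub _ hE.isSupportedInBlock_sub hn

theorem one_add_norm_le_oneNorm_inv_of_last (hE : IsTypeE n c (asharp n a) E) (ha : a 0 ≠ 0)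
    {k : ℕ} {i j : Fin n} (hi : (i : ℕ) = n - 1) (hj : 1 ≤ (j : ℕ) ∧ (j : ℕ) ≤ c)
    (hF : (cyclicShift n (-asharp n a 0) - E) i j = a (k + 1) / a 0) :
    1 + ‖a (k + 1)‖ ≤ oneNorm E⁻¹ := by
  have := one_add_norm_mul_le_oneNorm_invOfShiftSub (-a 0) hE.isSupportedInBlock_sub hi hj
  rwa [hF, neg_mul, norm_neg, mul_div_cancel₀ _ ha, ← hE.inv_eq_invOfShiftSub ha] at this

theorem one_add_norm_le_oneNorm_inv (hE : IsTypeE n c (asharp n a) E) (ha : a 0 ≠ 0)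
    (hn : 2 ≤ n) : 1 + ‖a (n - 1)‖ ≤ oneNorm E⁻¹ := by
  obtain ⟨i, j, hij, -, hj, hF⟩ := hE.exists_sub_apply (k := n - 2) le_rfl
  rw [asharp_sub_one_sub a (by omega)] at hF
  rw [show n - 1 = n - 2 + 1 by omega]
  exact hE.one_add_norm_le_oneNorm_inv_of_last ha (by have := i.isLt; omega) hj hF

theorem one_add_norm_div_le_oneNorm_inv (hE : IsTypeE n c (asharp n a) E) (ha : a 0 ≠ 0)
    (ha₁ : 1 ≤ ‖a 0‖) {k : ℕ} (hk : k + 2 ≤ n) :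
    1 + ‖a (k + 1)‖ / ‖a 0‖ ≤ oneNorm E⁻¹ := by
  obtain ⟨i, j, -, hi, hj, hF⟩ := hE.exists_sub_apply (k := k) (by omega)
  rw [asharp_sub_one_sub a hk] at hF
  by_cases hlast : (i : ℕ) = n - 1
  · calc 1 + ‖a (k + 1)‖ / ‖a 0‖ ≤ 1 + ‖a (k + 1)‖ := by
          gcongr; exact div_le_self (norm_nonneg _) ha₁
      _ ≤ oneNorm E⁻¹ := hE.one_add_norm_le_oneNorm_inv_of_last ha hlast hj hF
  · have := one_add_norm_le_oneNorm_invOfShiftSub (-a 0) hE.isSupportedInBlock_sub hi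
      (by have := i.isLt; omega) hj
    rwa [hF, norm_div, ← hE.inv_eq_invOfShiftSub ha] at this

end IsTypeE

theorem stmt17_general (n : ℕ) (a : ℕ → ℂ) (ha : a 0 ≠ 0)
    (ha0 : 1 < ‖a 0‖)
    (β : ℕ) (hβ2 : β ≤ n - 2)
    (hval : oneNorm (Xmat n β a) = ‖a 0‖ ∨
            oneNorm (Xmat n β a) = 1 + ‖a (n - 1)‖ ∨
            ∃ k : ℕ, 1 ≤ k ∧ k ≤ β - 1 ∧
              oneNorm (Xmat n β a) = 1 + ‖a k‖ / ‖a 0‖) :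
    ∀ c : ℕ, 1 ≤ c → c ≤ n - 2 →
      ∀ A : Matrix (Fin n) (Fin n) ℂ, IsTypeEInv n c a A →
        oneNorm (Xmat n β a) ≤ oneNorm A := by
  rintro c hc₁ hc₂ A ⟨E, hE, rfl⟩
  rcases hval with h | h | ⟨k, hk₁, hk₂, h⟩ <;> rw [h]
  · exact hE.norm_le_oneNorm_inv ha (by omega)
  · exact hE.one_add_norm_le_oneNorm_inv ha (by omega)
  · obtain ⟨k, rfl⟩ : ∃ k', k = k' + 1 := ⟨k - 1, by omega⟩
    exact hE.one_add_norm_div_le_oneNorm_inv ha ha0.le (by omega)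

/-- suppose `n ≥ 3`, `1 < |a_0|`, `|a_{n-1}| < M`, and
`β ∈ {1, …, n-2}` minimizes `‖X_b‖_1`.  If `‖X_β‖_1` belongs to
`{|a_0|, 1 + |a_{n-1}|} ∪ {1 + |a_k|/|a_0| : 1 ≤ k ≤ β-1}`, then
`‖X_β‖_1 ≤ ‖A‖_1` for every matrix `A` of type `E_c(p♯)⁻¹`, `1 ≤ c ≤ n-2`. -/
theorem stmt17 (n : ℕ) (hn : 3 ≤ n) (a : ℕ → ℂ) (ha : a 0 ≠ 0) (M : ℝ)
    (hM : IsGreatest ((fun k => ‖a k‖) '' (Set.Icc 1 (n - 1))) M)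
    (ha0 : 1 < ‖a 0‖) (han : ‖a (n - 1)‖ < M)
    (β : ℕ) (hβ1 : 1 ≤ β) (hβ2 : β ≤ n - 2)
    (hmin : ∀ b : ℕ, 1 ≤ b → b ≤ n - 2 → oneNorm (Xmat n β a) ≤ oneNorm (Xmat n b a))
    (hval : oneNorm (Xmat n β a) = ‖a 0‖ ∨
            oneNorm (Xmat n β a) = 1 + ‖a (n - 1)‖ ∨
            ∃ k : ℕ, 1 ≤ k ∧ k ≤ β - 1 ∧
              oneNorm (Xmat n β a) = 1 + ‖a k‖ / ‖a 0‖) :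
    ∀ c : ℕ, 1 ≤ c → c ≤ n - 2 →
      ∀ A : Matrix (Fin n) (Fin n) ℂ, IsTypeEInv n c a A →
        oneNorm (Xmat n β a) ≤ oneNorm A :=
  stmt17_general n a ha ha0 β hβ2 hval

end
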